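/- For every K ≥ 1 there exists a constant C depending only on K such that the following holds. Let T ∈ ℕ, η > 0, δ ∈ (0,1/2), let v, ṽ ∈ ℝ^{n2} be unit vectors, let ũ ∈ ℝ^{n1} with ‖ũ‖ ≤ 2, and let u ∈ ℝ^{n1} satisfy the normal equation u = ⟨v,v_⋆⟩u_⋆ + [(Id − 𝒜*𝒜)(uvᵀ − u_⋆v_⋆ᵀ)]v. Suppose 𝒜 satisfies the RIP with constant δ, that (1/m)·‖(Σ_i (A_i)_{1,1} O_i) ṽ^⊥‖ ≤ K·√((log T + log η)/m)·‖ṽ^⊥‖, and that (1/m)·|Σ_i ⟨O_iᵀe_1, ṽ⟩·⟨D_i, ũ^⊥(ṽ^⊥)ᵀ⟩_F| ≤ K·√((log T + log η)/m)·‖𝒜(ũ^⊥(ṽ^⊥)ᵀ)‖. Then: (a) |⟨𝒜(u_⋆(v^⊥)ᵀ), 𝒜(u_⋆v_⋆ᵀ)⟩| ≤ δ·‖v^⊥ − ṽ^⊥‖ + C·√((log T + log η)/m); and (b) |⟨𝒜(u_⋆(v^⊥)ᵀ), 𝒜(u^⊥(v^⊥)ᵀ)⟩| ≤ δ·‖u^⊥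 − ũ^⊥‖ + 2δ·‖v^⊥ − ṽ^⊥‖ + C·√((log T + log η)/m). -/

import Mathlib

/-!
Both bounds come from splitting off the differences `v⊥ - ṽ⊥` and `u⊥ - ũ⊥`. Every cross
term `⟨𝒜(x yᵀ), 𝒜(z wᵀ)⟩` whose rank-one arguments are Frobenius-orthogonal (here because `e₁`
is orthogonal to every perpendicular component) is at most `δ ‖x‖ ‖y‖ ‖z‖ ‖w‖`, by polarizing
the RIP. What is left are the anchor terms `⟨𝒜(e₁ ṽ⊥ᵀ), 𝒜(e₁ e₁ᵀ)⟩` and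
`⟨𝒜(e₁ ṽ⊥ᵀ), 𝒜(ũ⊥ ṽ⊥ᵀ)⟩`. Since `Oᵢ` and `Dᵢ` act like `Aᵢ` on the rank-one matrices involved,
expanding `𝒜` turns them into exactly the two sums that the hypotheses control, which gives
`C = 3K`.

The only size information needed beyond the hypotheses is `‖u⊥‖ ≤ 1`. With `E = u vᵀ - e₁ e₁ᵀ`
and `r = u - ⟨v, e₁⟩ e₁ = E v`, the normal equation says exactly that `𝒜*𝒜 E` annihilates `v`,
so `⟨𝒜(r vᵀ), 𝒜 E⟩ = 0` while `⟨r vᵀ, E⟩ = ‖r‖²`. The RIP then gives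
`‖r‖² ≤ δ ‖r‖ ‖E‖_F ≤ δ ‖r‖ √(‖r‖² + 1)`, which forces `‖r‖ ≤ 1` once `δ < 1/2`.
-/

open MeasureTheory ProbabilityTheory Matrix Finset
open scoped BigOperators ENNReal NNReal RealInnerProductSpace

noncomputable section

namespace ALSPaper

/-- View a plain vector as an element of Euclidean space. -/
def toE {n : ℕ} (x : Fin n → ℝ) : EuclideanSpace ℝ (Fin n) :=
  (WithLp.equiv 2 (Fin n → ℝ)).symm x

/-- View an element of Euclidean space as a plain vector. -/
def ofE {n : ℕ} (x : EuclideanSpace ℝ (Fin n)) : Fin n → ℝ :=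
  WithLp.equiv 2 (Fin n → ℝ) x

/-- The first standard basis vector. -/
def e1 (n : ℕ) : EuclideanSpace ℝ (Fin n) :=
  toE fun i => if (i : ℕ) = 0 then 1 else 0

/-- Frobenius inner product. -/
def frobInner {n1 n2 : ℕ} (A B : Matrix (Fin n1) (Fin n2) ℝ) : ℝ :=
  ∑ i, ∑ j, A i j * B i j

/-- Frobenius norm. -/
def frobNorm {n1 n2 : ℕ} (A : Matrix (Fin n1) (Fin n2) ℝ) : ℝ :=
  Real.sqrt (frobInner A A)

/-- The measurement operator. -/
def calA {n1 n2 m : ℕ} (A : Fin m → Matrix (Fin n1) (Fin n2) ℝ)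
    (X : Matrix (Fin n1) (Fin n2) ℝ) : EuclideanSpace ℝ (Fin m) :=
  toE fun i => (Real.sqrt m)⁻¹ * frobInner (A i) X

/-- The adjoint of the measurement operator. -/
def calAdj {n1 n2 m : ℕ} (A : Fin m → Matrix (Fin n1) (Fin n2) ℝ)
    (w : EuclideanSpace ℝ (Fin m)) : Matrix (Fin n1) (Fin n2) ℝ :=
  ∑ i, ((Real.sqrt m)⁻¹ * ofE w i) • A i

/-- The restricted isometry property (RIP) with constant `δ` (for rank ≤ 4). -/
def HasRIP {n1 n2 m : ℕ} (A : Fin m → Matrix (Fin n1) (Fin n2) ℝ) (δ : ℝ) : Prop :=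
  ∀ Z : Matrix (Fin n1) (Fin n2) ℝ, Z.rank ≤ 4 →
    (1 - δ) * frobNorm Z ^ 2 ≤ ‖calA A Z‖ ^ 2 ∧ ‖calA A Z‖ ^ 2 ≤ (1 + δ) * frobNorm Z ^ 2

/-- Component of `v` parallel to the first standard basis vector. -/
def par {n : ℕ} (v : EuclideanSpace ℝ (Fin n)) : EuclideanSpace ℝ (Fin n) :=
  ⟪e1 n, v⟫ • e1 n

/-- Component of `v` orthogonal to the first standard basis vector. -/
def perp {n : ℕ} (v : EuclideanSpace ℝ (Fin n)) : EuclideanSpace ℝ (Fin n) :=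
  v - par v

/-- The "diagonal block" part of a measurement matrix. -/
def Dmat {n1 n2 : ℕ} (A : Matrix (Fin n1) (Fin n2) ℝ) : Matrix (Fin n1) (Fin n2) ℝ :=
  vecMulVec (ofE (e1 n1)) (ofE (e1 n1)) * A * vecMulVec (ofE (e1 n2)) (ofE (e1 n2))
    + (1 - vecMulVec (ofE (e1 n1)) (ofE (e1 n1))) * A *
        (1 - vecMulVec (ofE (e1 n2)) (ofE (e1 n2)))

/-- The "off-diagonal block" part of a measurement matrix. -/
def Omat {n1 n2 : ℕ} (A : Matrix (Fin n1) (Fin n2) ℝ) : Matrix (Fin n1) (Fin n2) ℝ :=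
  vecMulVec (ofE (e1 n1)) (ofE (e1 n1)) * A * (1 - vecMulVec (ofE (e1 n2)) (ofE (e1 n2)))
    + (1 - vecMulVec (ofE (e1 n1)) (ofE (e1 n1))) * A * vecMulVec (ofE (e1 n2)) (ofE (e1 n2))

/-- The (1,1) entry of a matrix. -/
def ent11 {n1 n2 : ℕ} (A : Matrix (Fin n1) (Fin n2) ℝ) : ℝ :=
  frobInner (vecMulVec (ofE (e1 n1)) (ofE (e1 n2))) A

/-- Spectral (operator) norm of a matrix. -/
def specNorm {n1 n2 : ℕ} (M : Matrix (Fin n1) (Fin n2) ℝ) : ℝ :=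
  ‖LinearMap.toContinuousLinearMap (Matrix.toEuclideanLin M)‖

/-- The normal equation for the least-squares update. -/
def NormalEq {n1 n2 m : ℕ} (A : Fin m → Matrix (Fin n1) (Fin n2) ℝ)
    (u : EuclideanSpace ℝ (Fin n1)) (v : EuclideanSpace ℝ (Fin n2)) : Prop :=
  u = ⟪v, e1 n2⟫ • e1 n1 +
    toE (((vecMulVec (ofE u) (ofE v) - vecMulVec (ofE (e1 n1)) (ofE (e1 n2))) -
      calAdj A (calA A (vecMulVec (ofE u) (ofE v) - vecMulVec (ofE (e1 n1)) (ofE (e1 n2)))))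
        *ᵥ ofE v)

/-- sin of the angle between two vectors. -/
def sinAngle {n : ℕ} (a b : EuclideanSpace ℝ (Fin n)) : ℝ :=
  Real.sqrt (1 - ⟪a, b⟫ ^ 2 / (‖a‖ ^ 2 * ‖b‖ ^ 2))

/-- `c_t` sequence. -/
def cseq (n2 t : ℕ) : ℝ := (1 + 1 / Real.log n2) ^ t - 1

/-- ALS iterates. -/
def IsALS {n1 n2 m : ℕ} (A : Fin m → Matrix (Fin n1) (Fin n2) ℝ)
    (y : EuclideanSpace ℝ (Fin m)) (v0 : EuclideanSpace ℝ (Fin n2))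
    (u : ℕ → EuclideanSpace ℝ (Fin n1)) (v : ℕ → EuclideanSpace ℝ (Fin n2))
    (uh : ℕ → EuclideanSpace ℝ (Fin n1)) (vh : ℕ → EuclideanSpace ℝ (Fin n2)) : Prop :=
  v 0 = v0 ∧
  ∀ t : ℕ,
    (∀ u' : EuclideanSpace ℝ (Fin n1),
      ‖y - calA A (vecMulVec (ofE (uh t)) (ofE (v t)))‖ ≤
        ‖y - calA A (vecMulVec (ofE u') (ofE (v t)))‖) ∧
    u (t + 1) = ‖uh t‖⁻¹ • uh t ∧
    (∀ v' : EuclideanSpace ℝ (Fin n2),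
      ‖y - calA A (vecMulVec (ofE (u (t + 1))) (ofE (vh t)))‖ ≤
        ‖y - calA A (vecMulVec (ofE (u (t + 1))) (ofE v'))‖) ∧
    v (t + 1) = ‖vh t‖⁻¹ • vh t

section Vectors

variable {n : ℕ}

lemma e1_succ (k : ℕ) : e1 (k + 1) = EuclideanSpace.single 0 1 := by
  ext i; simp [e1, toE, PiLp.single_apply, Fin.val_eq_zero_iff]

-- `e1 0 = 0`, so the norm is `1` only in positive dimension.
lemma norm_e1_le_one : ‖e1 n‖ ≤ 1 := by
  cases n with
  | zero => simp [Subsingleton.elim (e1 0) 0]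
  | succ k => simp [e1_succ]

lemma par_e1 : par (e1 n) = e1 n := by
  cases n with
  | zero => exact Subsingleton.elim _ _
  | succ k => simp [par, e1_succ]

lemma inner_e1_perp (x : EuclideanSpace ℝ (Fin n)) : ⟪e1 n, perp x⟫ = 0 := by
  cases n with
  | zero => simp [Subsingleton.elim (e1 0) 0]
  | succ k => simp [perp, par, e1_succ, inner_sub_right, inner_smul_right]

lemma inner_perp_e1 (x : EuclideanSpace ℝ (Fin n)) : ⟪perp x, e1 n⟫ = 0 := by
  rw [real_inner_comm, inner_e1_perp]

lemma perp_e1 : perp (e1 n) = 0 := by rw [perp, par_e1, sub_self]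

lemma par_perp (x : EuclideanSpace ℝ (Fin n)) : par (perp x) = 0 := by
  rw [par, inner_e1_perp, zero_smul]

lemma perp_perp (x : EuclideanSpace ℝ (Fin n)) : perp (perp x) = perp x :=
  sub_eq_self.2 (par_perp x)

lemma perp_sub (x y : EuclideanSpace ℝ (Fin n)) : perp (x - y) = perp x - perp y := by
  simp only [perp, par, inner_sub_right, sub_smul]; abel

lemma perp_smul (c : ℝ) (x : EuclideanSpace ℝ (Fin n)) : perp (c • x) = c • perp x := by
  simp only [perp, par, inner_smul_right, smul_sub, mul_smul]

lemma norm_perp_le (x : EuclideanSpace ℝ (Fin n)) : ‖perp x‖ ≤ ‖x‖ := by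
  have horth : ⟪par x, perp x⟫ = 0 := by rw [par, inner_smul_left, inner_e1_perp, mul_zero]
  have h := norm_add_sq_eq_norm_sq_add_norm_sq_real horth
  rw [show par x + perp x = x from add_sub_cancel _ _] at h
  nlinarith [norm_nonneg (par x), norm_nonneg x, norm_nonneg (perp x)]

end Vectors

section Frobenius

variable {n1 n2 : ℕ}

lemma frobInner_comm (X Y : Matrix (Fin n1) (Fin n2) ℝ) : frobInner X Y = frobInner Y X := by
  simp only [frobInner, mul_comm]

lemma frobInner_add_right (X Y Z : Matrix (Fin n1) (Fin n2) ℝ) :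
    frobInner X (Y + Z) = frobInner X Y + frobInner X Z := by
  simp only [frobInner, Matrix.add_apply, mul_add, Finset.sum_add_distrib]

lemma frobInner_add_left (X Y Z : Matrix (Fin n1) (Fin n2) ℝ) :
    frobInner (X + Y) Z = frobInner X Z + frobInner Y Z := by
  simp only [frobInner, Matrix.add_apply, add_mul, Finset.sum_add_distrib]

lemma frobInner_sub_right (X Y Z : Matrix (Fin n1) (Fin n2) ℝ) :
    frobInner X (Y - Z) = frobInner X Y - frobInner X Z := by
  simp only [frobInner, Matrix.sub_apply, mul_sub, Finset.sum_sub_distrib]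

lemma frobInner_sub_left (X Y Z : Matrix (Fin n1) (Fin n2) ℝ) :
    frobInner (X - Y) Z = frobInner X Z - frobInner Y Z := by
  simp only [frobInner, Matrix.sub_apply, sub_mul, Finset.sum_sub_distrib]

lemma frobInner_smul_left (c : ℝ) (X Y : Matrix (Fin n1) (Fin n2) ℝ) :
    frobInner (c • X) Y = c * frobInner X Y := by
  simp only [frobInner, Matrix.smul_apply, smul_eq_mul, Finset.mul_sum, mul_assoc]

lemma frobInner_smul_right (c : ℝ) (X Y : Matrix (Fin n1) (Fin n2) ℝ) :
    frobInner X (c • Y) = c * frobInner X Y := by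
  simp only [frobInner, Matrix.smul_apply, smul_eq_mul, Finset.mul_sum, mul_left_comm]

lemma frobInner_zero_right (X : Matrix (Fin n1) (Fin n2) ℝ) : frobInner X 0 = 0 := by
  simp [frobInner]

lemma frobInner_sum_left {ι : Type*} (s : Finset ι) (M : ι → Matrix (Fin n1) (Fin n2) ℝ)
    (Y : Matrix (Fin n1) (Fin n2) ℝ) :
    frobInner (∑ i ∈ s, M i) Y = ∑ i ∈ s, frobInner (M i) Y := by
  simp only [frobInner, Matrix.sum_apply, Finset.sum_mul]
  exact (Finset.sum_congr rfl fun _ _ => Finset.sum_comm).trans Finset.sum_comm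

lemma frobInner_self_nonneg (X : Matrix (Fin n1) (Fin n2) ℝ) : 0 ≤ frobInner X X :=
  Finset.sum_nonneg fun _ _ => Finset.sum_nonneg fun _ _ => mul_self_nonneg _

lemma frobNorm_nonneg (X : Matrix (Fin n1) (Fin n2) ℝ) : 0 ≤ frobNorm X := Real.sqrt_nonneg _

lemma frobNorm_sq (X : Matrix (Fin n1) (Fin n2) ℝ) : frobNorm X ^ 2 = frobInner X X :=
  Real.sq_sqrt (frobInner_self_nonneg X)

lemma frobNorm_smul_sq (c : ℝ) (X : Matrix (Fin n1) (Fin n2) ℝ) :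
    frobNorm (c • X) ^ 2 = c ^ 2 * frobNorm X ^ 2 := by
  rw [frobNorm_sq, frobNorm_sq, frobInner_smul_left, frobInner_smul_right]; ring

lemma eq_zero_of_frobNorm_eq_zero {X : Matrix (Fin n1) (Fin n2) ℝ} (h : frobNorm X = 0) :
    X = 0 := by
  have h0 : frobInner X X = 0 := by rw [← frobNorm_sq, h, sq, mul_zero]
  have hrow : ∀ i, ∑ j, X i j * X i j = 0 := fun i =>
    (Finset.sum_eq_zero_iff_of_nonneg fun i _ => Finset.sum_nonneg fun j _ =>
      mul_self_nonneg (X i j)).1 h0 i (Finset.mem_univ i)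
  ext i j
  exact mul_self_eq_zero.1 ((Finset.sum_eq_zero_iff_of_nonneg fun j _ =>
    mul_self_nonneg (X i j)).1 (hrow i) j (Finset.mem_univ j))

lemma frobInner_vecMulVec (M : Matrix (Fin n1) (Fin n2) ℝ) (x : Fin n1 → ℝ) (y : Fin n2 → ℝ) :
    frobInner M (vecMulVec x y) = x ⬝ᵥ (M *ᵥ y) := by
  simp only [frobInner, dotProduct, Matrix.mulVec, Matrix.vecMulVec_apply, Finset.mul_sum]
  exact Finset.sum_congr rfl fun _ _ => Finset.sum_congr rfl fun _ _ => by ring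

lemma frobInner_mul_mul_vecMulVec (L : Matrix (Fin n1) (Fin n1) ℝ)
    (M : Matrix (Fin n1) (Fin n2) ℝ) (R : Matrix (Fin n2) (Fin n2) ℝ)
    (x : Fin n1 → ℝ) (y : Fin n2 → ℝ) :
    frobInner (L * M * R) (vecMulVec x y) = frobInner M (vecMulVec (Lᵀ *ᵥ x) (R *ᵥ y)) := by
  rw [frobInner_vecMulVec, frobInner_vecMulVec, ← Matrix.mulVec_mulVec, ← Matrix.mulVec_mulVec,
    Matrix.dotProduct_mulVec x L, Matrix.mulVec_transpose]

lemma frobInner_vecMulVec_vecMulVec (x z : Fin n1 → ℝ) (y w : Fin n2 → ℝ) :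
    frobInner (vecMulVec x y) (vecMulVec z w) = (x ⬝ᵥ z) * (y ⬝ᵥ w) := by
  rw [frobInner_comm, frobInner_vecMulVec, Matrix.vecMulVec_mulVec]
  simp [dotProduct_comm, mul_comm]

end Frobenius

section RankOne

variable {n n1 n2 : ℕ}

lemma ofE_zero : ofE (0 : EuclideanSpace ℝ (Fin n)) = 0 := rfl

lemma ofE_toE (x : Fin n → ℝ) : ofE (toE x) = x := rfl

lemma dotProduct_ofE (x y : EuclideanSpace ℝ (Fin n)) : ofE x ⬝ᵥ ofE y = ⟪x, y⟫ := by
  rw [EuclideanSpace.inner_eq_star_dotProduct, star_trivial, dotProduct_comm]; rfl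

lemma frobInner_rankOne (x z : EuclideanSpace ℝ (Fin n1)) (y w : EuclideanSpace ℝ (Fin n2)) :
    frobInner (vecMulVec (ofE x) (ofE y)) (vecMulVec (ofE z) (ofE w)) = ⟪x, z⟫ * ⟪y, w⟫ := by
  rw [frobInner_vecMulVec_vecMulVec, dotProduct_ofE, dotProduct_ofE]

lemma frobNorm_rankOne (x : EuclideanSpace ℝ (Fin n1)) (y : EuclideanSpace ℝ (Fin n2)) :
    frobNorm (vecMulVec (ofE x) (ofE y)) = ‖x‖ * ‖y‖ := by
  rw [frobNorm, frobInner_rankOne, real_inner_self_eq_norm_sq, real_inner_self_eq_norm_sq,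
    ← mul_pow, Real.sqrt_sq (by positivity)]

lemma rankOne_add_left (x x' : EuclideanSpace ℝ (Fin n1)) (y : EuclideanSpace ℝ (Fin n2)) :
    vecMulVec (ofE (x + x')) (ofE y) = vecMulVec (ofE x) (ofE y) + vecMulVec (ofE x') (ofE y) :=
  Matrix.add_vecMulVec _ _ _

lemma rankOne_add_right (x : EuclideanSpace ℝ (Fin n1)) (y y' : EuclideanSpace ℝ (Fin n2)) :
    vecMulVec (ofE x) (ofE (y + y')) = vecMulVec (ofE x) (ofE y) + vecMulVec (ofE x) (ofE y') :=
  Matrix.vecMulVec_add _ _ _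

lemma e1_proj_mulVec (x : EuclideanSpace ℝ (Fin n)) :
    vecMulVec (ofE (e1 n)) (ofE (e1 n)) *ᵥ ofE x = ofE (par x) := by
  rw [Matrix.vecMulVec_mulVec, dotProduct_ofE]
  ext i
  simp [par, ofE, mul_comm]

lemma one_sub_e1_proj_mulVec (x : EuclideanSpace ℝ (Fin n)) :
    (1 - vecMulVec (ofE (e1 n)) (ofE (e1 n))) *ᵥ ofE x = ofE (perp x) := by
  rw [Matrix.sub_mulVec, Matrix.one_mulVec, e1_proj_mulVec]; rfl

lemma transpose_e1_proj :
    (vecMulVec (ofE (e1 n)) (ofE (e1 n)))ᵀ = vecMulVec (ofE (e1 n)) (ofE (e1 n)) :=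
  Matrix.transpose_vecMulVec _ _

lemma transpose_one_sub_e1_proj :
    (1 - vecMulVec (ofE (e1 n)) (ofE (e1 n)))ᵀ = 1 - vecMulVec (ofE (e1 n)) (ofE (e1 n)) := by
  rw [Matrix.transpose_sub, Matrix.transpose_one, transpose_e1_proj]

lemma frobInner_Omat_rankOne (M : Matrix (Fin n1) (Fin n2) ℝ) (x : EuclideanSpace ℝ (Fin n1))
    (y : EuclideanSpace ℝ (Fin n2)) :
    frobInner (Omat M) (vecMulVec (ofE x) (ofE y)) =
      frobInner M (vecMulVec (ofE (par x)) (ofE (perp y))) +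
        frobInner M (vecMulVec (ofE (perp x)) (ofE (par y))) := by
  simp only [Omat, frobInner_add_left, frobInner_mul_mul_vecMulVec, transpose_e1_proj,
    transpose_one_sub_e1_proj, e1_proj_mulVec, one_sub_e1_proj_mulVec]

lemma frobInner_Dmat_rankOne (M : Matrix (Fin n1) (Fin n2) ℝ) (x : EuclideanSpace ℝ (Fin n1))
    (y : EuclideanSpace ℝ (Fin n2)) :
    frobInner (Dmat M) (vecMulVec (ofE x) (ofE y)) =
      frobInner M (vecMulVec (ofE (par x)) (ofE (par y))) +
        frobInner M (vecMulVec (ofE (perp x)) (ofE (perp y))) := by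
  simp only [Dmat, frobInner_add_left, frobInner_mul_mul_vecMulVec, transpose_e1_proj,
    transpose_one_sub_e1_proj, e1_proj_mulVec, one_sub_e1_proj_mulVec]

end RankOne

section Measurement

variable {n1 n2 m : ℕ} (A : Fin m → Matrix (Fin n1) (Fin n2) ℝ)

lemma calA_add (X Y : Matrix (Fin n1) (Fin n2) ℝ) : calA A (X + Y) = calA A X + calA A Y := by
  ext i; simp [calA, toE, frobInner_add_right, mul_add]

lemma calA_sub (X Y : Matrix (Fin n1) (Fin n2) ℝ) : calA A (X - Y) = calA A X - calA A Y := by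
  ext i; simp [calA, toE, frobInner_sub_right, mul_sub]

lemma calA_smul (c : ℝ) (X : Matrix (Fin n1) (Fin n2) ℝ) : calA A (c • X) = c • calA A X := by
  ext i; simp [calA, toE, frobInner_smul_right, mul_left_comm]

lemma calA_zero : calA A 0 = 0 := by
  simpa using calA_smul A 0 0

lemma ofE_calA_apply (X : Matrix (Fin n1) (Fin n2) ℝ) (i : Fin m) :
    ofE (calA A X) i = (Real.sqrt m)⁻¹ * frobInner (A i) X := rfl

lemma inv_sqrt_mul_inv_sqrt : (Real.sqrt m)⁻¹ * (Real.sqrt m)⁻¹ = (m : ℝ)⁻¹ := by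
  rw [← Real.sqrt_inv, Real.mul_self_sqrt (inv_nonneg.2 (Nat.cast_nonneg m))]

lemma inner_calA (X Y : Matrix (Fin n1) (Fin n2) ℝ) :
    ⟪calA A X, calA A Y⟫ = (m : ℝ)⁻¹ * ∑ i, frobInner (A i) X * frobInner (A i) Y := by
  rw [← dotProduct_ofE, dotProduct, Finset.mul_sum, ← inv_sqrt_mul_inv_sqrt]
  refine Finset.sum_congr rfl fun i _ => ?_
  rw [ofE_calA_apply, ofE_calA_apply]
  ring

lemma inner_calA_eq_frobInner_calAdj (X Y : Matrix (Fin n1) (Fin n2) ℝ) :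
    ⟪calA A X, calA A Y⟫ = frobInner (calAdj A (calA A Y)) X := by
  rw [inner_calA, calAdj, frobInner_sum_left, Finset.mul_sum]
  refine Finset.sum_congr rfl fun i _ => ?_
  rw [frobInner_smul_left, ofE_calA_apply, ← inv_sqrt_mul_inv_sqrt]
  ring

end Measurement

lemma _root_.Matrix.rank_add_le {n1 n2 : ℕ} (X Y : Matrix (Fin n1) (Fin n2) ℝ) :
    (X + Y).rank ≤ X.rank + Y.rank := by
  have hle : LinearMap.range (X + Y).mulVecLin ≤
      LinearMap.range X.mulVecLin ⊔ LinearMap.range Y.mulVecLin := by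
    rintro _ ⟨v, rfl⟩
    rw [Matrix.mulVecLin_add]
    exact Submodule.mem_sup.2 ⟨X.mulVecLin v, ⟨v, rfl⟩, Y.mulVecLin v, ⟨v, rfl⟩, rfl⟩
  exact (Submodule.finrank_mono hle).trans (Submodule.finrank_add_le_finrank_add_finrank _ _)

lemma _root_.Matrix.rank_smul_le {n1 n2 : ℕ} (c : ℝ) (X : Matrix (Fin n1) (Fin n2) ℝ) :
    (c • X).rank ≤ X.rank := by
  simpa using Matrix.rank_mul_le_left X (c • (1 : Matrix (Fin n2) (Fin n2) ℝ))

lemma _root_.Matrix.rank_sub_le {n1 n2 : ℕ} (X Y : Matrix (Fin n1) (Fin n2) ℝ) :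
    (X - Y).rank ≤ X.rank + Y.rank := by
  rw [sub_eq_add_neg, ← neg_one_smul ℝ Y]
  exact (Matrix.rank_add_le _ _).trans (by gcongr; exact Matrix.rank_smul_le _ _)

namespace HasRIP

variable {n1 n2 m : ℕ} {A : Fin m → Matrix (Fin n1) (Fin n2) ℝ} {δ : ℝ}

lemma abs_inner_sub_frobInner_le_half (hR : HasRIP A δ) {X Y : Matrix (Fin n1) (Fin n2) ℝ}
    (hX : X.rank ≤ 2) (hY : Y.rank ≤ 2) :
    |⟪calA A X, calA A Y⟫ - frobInner X Y| ≤ δ / 2 * (frobNorm X ^ 2 + frobNorm Y ^ 2) := by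
  obtain ⟨hAdd₁, hAdd₂⟩ := hR (X + Y) ((Matrix.rank_add_le X Y).trans (by omega))
  obtain ⟨hSub₁, hSub₂⟩ := hR (X - Y) ((Matrix.rank_sub_le X Y).trans (by omega))
  rw [calA_add, norm_add_sq_real, frobNorm_sq, frobInner_add_left, frobInner_add_right,
    frobInner_add_right, frobInner_comm Y X, ← frobNorm_sq, ← frobNorm_sq] at hAdd₁ hAdd₂
  rw [calA_sub, norm_sub_sq_real, frobNorm_sq, frobInner_sub_left, frobInner_sub_right,
    frobInner_sub_right, frobInner_comm Y X, ← frobNorm_sq, ← frobNorm_sq] at hSub₁ hSub₂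
  rw [abs_le]
  constructor <;> linarith

lemma abs_inner_sub_frobInner_le (hR : HasRIP A δ)
    {X Y : Matrix (Fin n1) (Fin n2) ℝ} (hX : X.rank ≤ 2) (hY : Y.rank ≤ 2) :
    |⟪calA A X, calA A Y⟫ - frobInner X Y| ≤ δ * frobNorm X * frobNorm Y := by
  rcases (frobNorm_nonneg X).eq_or_lt with hx | hx
  · rw [← hx, mul_zero, zero_mul, eq_zero_of_frobNorm_eq_zero hx.symm]
    simp [calA_zero, frobInner]
  rcases (frobNorm_nonneg Y).eq_or_lt with hy | hy
  · rw [← hy, mul_zero, eq_zero_of_frobNorm_eq_zero hy.symm]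
    simp [calA_zero, frobInner]
  -- polarize at the rescaled pair `(‖Y‖ • X, ‖X‖ • Y)`, whose two norms coincide
  have h := hR.abs_inner_sub_frobInner_le_half (X := frobNorm Y • X) (Y := frobNorm X • Y)
    ((Matrix.rank_smul_le _ _).trans hX) ((Matrix.rank_smul_le _ _).trans hY)
  rw [calA_smul, calA_smul, real_inner_smul_left, real_inner_smul_right, frobInner_smul_left,
    frobInner_smul_right, frobNorm_smul_sq, frobNorm_smul_sq,
    show ∀ a b I F : ℝ, b * (a * I) - b * (a * F) = (a * b) * (I - F) by intros; ring,
    abs_mul, abs_of_pos (by positivity)] at h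
  refine le_of_mul_le_mul_left (h.trans_eq ?_) (mul_pos hx hy)
  ring

lemma abs_inner_rankOne_le (hR : HasRIP A δ) {x z : EuclideanSpace ℝ (Fin n1)}
    {y w : EuclideanSpace ℝ (Fin n2)} (horth : ⟪x, z⟫ * ⟪y, w⟫ = 0) :
    |⟪calA A (vecMulVec (ofE x) (ofE y)), calA A (vecMulVec (ofE z) (ofE w))⟫|
      ≤ δ * (‖x‖ * ‖y‖) * (‖z‖ * ‖w‖) := by
  have h := hR.abs_inner_sub_frobInner_le
    ((Matrix.rank_vecMulVec_le (ofE x) (ofE y)).trans one_le_two)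
    ((Matrix.rank_vecMulVec_le (ofE z) (ofE w)).trans one_le_two)
  rwa [frobInner_rankOne, horth, sub_zero, frobNorm_rankOne, frobNorm_rankOne] at h

lemma norm_calA_le (hR : HasRIP A δ) (hδ : δ ≤ 5 / 4) {X : Matrix (Fin n1) (Fin n2) ℝ}
    (hX : X.rank ≤ 4) : ‖calA A X‖ ≤ 3 / 2 * frobNorm X := by
  have h := (hR X hX).2
  nlinarith [norm_nonneg (calA A X), frobNorm_nonneg X]

end HasRIP

section NormalEquation

variable {n1 n2 m : ℕ}

def errorMatrix (u : EuclideanSpace ℝ (Fin n1)) (v : EuclideanSpace ℝ (Fin n2)) :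
    Matrix (Fin n1) (Fin n2) ℝ :=
  vecMulVec (ofE u) (ofE v) - vecMulVec (ofE (e1 n1)) (ofE (e1 n2))

variable {u : EuclideanSpace ℝ (Fin n1)} {v : EuclideanSpace ℝ (Fin n2)}

lemma rank_errorMatrix_le : (errorMatrix u v).rank ≤ 2 :=
  (Matrix.rank_sub_le _ _).trans
    (add_le_add (Matrix.rank_vecMulVec_le _ _) (Matrix.rank_vecMulVec_le _ _))

lemma errorMatrix_mulVec (hv : ‖v‖ = 1) :
    errorMatrix u v *ᵥ ofE v = ofE (u - ⟪v, e1 n2⟫ • e1 n1) := by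
  rw [errorMatrix, Matrix.sub_mulVec, Matrix.vecMulVec_mulVec, Matrix.vecMulVec_mulVec,
    dotProduct_ofE, dotProduct_ofE, real_inner_self_eq_norm_sq, hv, real_inner_comm]
  ext i
  simp [ofE, mul_comm]

lemma frobInner_rankOne_errorMatrix (hv : ‖v‖ = 1) :
    frobInner (vecMulVec (ofE (u - ⟪v, e1 n2⟫ • e1 n1)) (ofE v)) (errorMatrix u v) =
      ‖u - ⟪v, e1 n2⟫ • e1 n1‖ ^ 2 := by
  rw [frobInner_comm, frobInner_vecMulVec, errorMatrix_mulVec hv, dotProduct_ofE,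
    real_inner_self_eq_norm_sq]

lemma frobNorm_errorMatrix_sq_le (hv : ‖v‖ = 1) :
    frobNorm (errorMatrix u v) ^ 2 ≤ ‖u - ⟪v, e1 n2⟫ • e1 n1‖ ^ 2 + 1 := by
  have he1 : ‖e1 n1‖ ≤ 1 := norm_e1_le_one
  have he2 : ‖e1 n2‖ ≤ 1 := norm_e1_le_one
  rw [frobNorm_sq, errorMatrix, frobInner_sub_left, frobInner_sub_right, frobInner_sub_right,
    frobInner_rankOne, frobInner_rankOne, frobInner_rankOne, frobInner_rankOne,
    norm_sub_sq_real, real_inner_smul_right, norm_smul, Real.norm_eq_abs, mul_pow, sq_abs]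
  simp only [real_inner_self_eq_norm_sq, hv, real_inner_comm (e1 n2) v,
    real_inner_comm (e1 n1) u]
  have hprod : ‖e1 n1‖ ^ 2 * ‖e1 n2‖ ^ 2 ≤ 1 :=
    mul_le_one₀ (pow_le_one₀ (norm_nonneg _) he1) (sq_nonneg _) (pow_le_one₀ (norm_nonneg _) he2)
  nlinarith [mul_nonneg (sq_nonneg ⟪e1 n2, v⟫) (sq_nonneg ‖e1 n1‖)]

namespace NormalEq

variable {A : Fin m → Matrix (Fin n1) (Fin n2) ℝ}

lemma calAdj_mulVec_eq_zero (h : NormalEq A u v) (hv : ‖v‖ = 1) :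
    calAdj A (calA A (errorMatrix u v)) *ᵥ ofE v = 0 := by
  have h' : u = ⟪v, e1 n2⟫ • e1 n1 +
      toE ((errorMatrix u v - calAdj A (calA A (errorMatrix u v))) *ᵥ ofE v) := h
  rw [Matrix.sub_mulVec, errorMatrix_mulVec hv] at h'
  change u = _ + ((u - _) - toE _) at h'
  rw [add_sub, add_sub_cancel, eq_comm, sub_eq_self] at h'
  exact congrArg ofE h'

lemma inner_calA_rankOne_errorMatrix (h : NormalEq A u v) (hv : ‖v‖ = 1)
    (x : EuclideanSpace ℝ (Fin n1)) :
    ⟪calA A (vecMulVec (ofE x) (ofE v)), calA A (errorMatrix u v)⟫ = 0 := by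
  rw [inner_calA_eq_frobInner_calAdj, frobInner_vecMulVec, h.calAdj_mulVec_eq_zero hv,
    dotProduct_zero]

variable {δ : ℝ}

lemma norm_sub_le_one (h : NormalEq A u v) (hR : HasRIP A δ) (hδ : δ < 1 / 2) (hv : ‖v‖ = 1) :
    ‖u - ⟪v, e1 n2⟫ • e1 n1‖ ≤ 1 := by
  have hcross := hR.abs_inner_sub_frobInner_le (Y := errorMatrix u v)
    ((Matrix.rank_vecMulVec_le (ofE (u - ⟪v, e1 n2⟫ • e1 n1)) (ofE v)).trans
      one_le_two) rank_errorMatrix_le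
  rw [h.inner_calA_rankOne_errorMatrix hv, frobInner_rankOne_errorMatrix hv, zero_sub, abs_neg,
    abs_of_nonneg (sq_nonneg _), frobNorm_rankOne, hv, mul_one] at hcross
  have hE := frobNorm_errorMatrix_sq_le (u := u) hv
  have hρ := norm_nonneg (u - ⟪v, e1 n2⟫ • e1 n1)
  have hF := frobNorm_nonneg (errorMatrix u v)
  generalize ‖u - ⟪v, e1 n2⟫ • e1 n1‖ = ρ, frobNorm (errorMatrix u v) = F at hcross hE hρ hF ⊢
  rcases hρ.eq_or_lt with rfl | hpos
  · exact zero_le_one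
  have hρF : ρ ≤ δ * F := le_of_mul_le_mul_left (by nlinarith) hpos
  have hδ0 : 0 ≤ δ := by
    by_contra hneg
    nlinarith
  have hsq : ρ ^ 2 ≤ δ ^ 2 * (ρ ^ 2 + 1) :=
    calc ρ ^ 2 ≤ (δ * F) ^ 2 := pow_le_pow_left₀ hρ hρF 2
      _ = δ ^ 2 * F ^ 2 := mul_pow δ F 2
      _ ≤ δ ^ 2 * (ρ ^ 2 + 1) := mul_le_mul_of_nonneg_left hE (sq_nonneg δ)
  have hδsq : δ ^ 2 ≤ 1 / 4 := by nlinarith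
  nlinarith [mul_le_mul_of_nonneg_right hδsq (by positivity : (0 : ℝ) ≤ ρ ^ 2 + 1)]

lemma norm_perp_le_one (h : NormalEq A u v) (hR : HasRIP A δ) (hδ : δ < 1 / 2)
    (hv : ‖v‖ = 1) : ‖perp u‖ ≤ 1 :=
  calc ‖perp u‖ = ‖perp (u - ⟪v, e1 n2⟫ • e1 n1)‖ := by
        rw [perp_sub, perp_smul, perp_e1, smul_zero, sub_zero]
    _ ≤ ‖u - ⟪v, e1 n2⟫ • e1 n1‖ := norm_perp_le _
    _ ≤ 1 := h.norm_sub_le_one hR hδ hv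

end NormalEq

end NormalEquation

section Anchors

variable {n1 n2 m : ℕ}

lemma frobInner_Omat_e1 (M : Matrix (Fin n1) (Fin n2) ℝ) (y : EuclideanSpace ℝ (Fin n2)) :
    frobInner (Omat M) (vecMulVec (ofE (e1 n1)) (ofE y)) =
      frobInner M (vecMulVec (ofE (e1 n1)) (ofE (perp y))) := by
  rw [frobInner_Omat_rankOne, par_e1, perp_e1, ofE_zero, Matrix.zero_vecMulVec,
    frobInner_zero_right, add_zero]

lemma frobInner_Dmat_perp (M : Matrix (Fin n1) (Fin n2) ℝ) (x : EuclideanSpace ℝ (Fin n1))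
    (y : EuclideanSpace ℝ (Fin n2)) :
    frobInner (Dmat M) (vecMulVec (ofE (perp x)) (ofE (perp y))) =
      frobInner M (vecMulVec (ofE (perp x)) (ofE (perp y))) := by
  simp only [frobInner_Dmat_rankOne, par_perp, perp_perp, ofE_zero, Matrix.zero_vecMulVec,
    frobInner_zero_right, zero_add]

variable (A : Fin m → Matrix (Fin n1) (Fin n2) ℝ)

lemma inner_calA_e1_perp_e1_e1 (y : EuclideanSpace ℝ (Fin n2)) :
    ⟪calA A (vecMulVec (ofE (e1 n1)) (ofE (perp y))),
        calA A (vecMulVec (ofE (e1 n1)) (ofE (e1 n2)))⟫ =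
      (m : ℝ)⁻¹ * ⟪e1 n1, toE ((∑ i, ent11 (A i) • Omat (A i)) *ᵥ ofE (perp y))⟫ := by
  rw [inner_calA, ← dotProduct_ofE, ofE_toE,
    ← frobInner_vecMulVec, frobInner_sum_left]
  congr 1
  refine Finset.sum_congr rfl fun i _ => ?_
  rw [frobInner_smul_left, frobInner_Omat_e1, perp_perp, ent11, frobInner_comm _ (A i), mul_comm]

lemma inner_calA_e1_perp_perp_perp (x : EuclideanSpace ℝ (Fin n1))
    (y : EuclideanSpace ℝ (Fin n2)) :
    ⟪calA A (vecMulVec (ofE (e1 n1)) (ofE (perp y))),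
        calA A (vecMulVec (ofE (perp x)) (ofE (perp y)))⟫ =
      (m : ℝ)⁻¹ * ∑ i, (((Omat (A i))ᵀ *ᵥ ofE (e1 n1)) ⬝ᵥ ofE y) *
        frobInner (Dmat (A i)) (vecMulVec (ofE (perp x)) (ofE (perp y))) := by
  rw [inner_calA]
  congr 1
  refine Finset.sum_congr rfl fun i _ => ?_
  rw [Matrix.mulVec_transpose, ← Matrix.dotProduct_mulVec, ← frobInner_vecMulVec,
    frobInner_Omat_e1, frobInner_Dmat_perp]

end Anchors

section Bounds

variable {n1 n2 m : ℕ} {A : Fin m → Matrix (Fin n1) (Fin n2) ℝ} {δ κ : ℝ}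

lemma abs_inner_calA_e1_perp_e1_e1_le (hR : HasRIP A δ) (hδ : 0 ≤ δ) (hκ : 0 ≤ κ)
    {v vt : EuclideanSpace ℝ (Fin n2)} (hvt : ‖vt‖ ≤ 1)
    (hH : (1 / (m : ℝ)) * ‖toE ((∑ i, ent11 (A i) • Omat (A i)) *ᵥ ofE (perp vt))‖
      ≤ κ * ‖perp vt‖) :
    |⟪calA A (vecMulVec (ofE (e1 n1)) (ofE (perp v))),
        calA A (vecMulVec (ofE (e1 n1)) (ofE (e1 n2)))⟫|
      ≤ δ * ‖perp v - perp vt‖ + κ := by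
  have he1 : ‖e1 n1‖ ≤ 1 := norm_e1_le_one
  have he2 : ‖e1 n2‖ ≤ 1 := norm_e1_le_one
  have hsplit : perp v = perp (v - vt) + perp vt := by rw [perp_sub, sub_add_cancel]
  rw [← perp_sub, hsplit, rankOne_add_right, calA_add, inner_add_left]
  have hmain : |⟪calA A (vecMulVec (ofE (e1 n1)) (ofE (perp (v - vt)))),
      calA A (vecMulVec (ofE (e1 n1)) (ofE (e1 n2)))⟫| ≤ δ * ‖perp (v - vt)‖ := by
    refine (hR.abs_inner_rankOne_le (by rw [inner_perp_e1, mul_zero])).trans ?_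
    calc δ * (‖e1 n1‖ * ‖perp (v - vt)‖) * (‖e1 n1‖ * ‖e1 n2‖)
        ≤ δ * (1 * ‖perp (v - vt)‖) * (1 * 1) := by gcongr
      _ = δ * ‖perp (v - vt)‖ := by ring
  have hanchor : |⟪calA A (vecMulVec (ofE (e1 n1)) (ofE (perp vt))),
      calA A (vecMulVec (ofE (e1 n1)) (ofE (e1 n2)))⟫| ≤ κ := by
    rw [inner_calA_e1_perp_e1_e1, abs_mul, abs_inv, Nat.abs_cast]
    calc (m : ℝ)⁻¹ * |⟪e1 n1, toE ((∑ i, ent11 (A i) • Omat (A i)) *ᵥ ofE (perp vt))⟫|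
        ≤ (m : ℝ)⁻¹ * (1 * ‖toE ((∑ i, ent11 (A i) • Omat (A i)) *ᵥ ofE (perp vt))‖) := by
          gcongr
          exact (abs_real_inner_le_norm _ _).trans (by gcongr)
      _ ≤ κ * ‖perp vt‖ := by rwa [one_mul, ← one_div]
      _ ≤ κ := mul_le_of_le_one_right hκ ((norm_perp_le vt).trans hvt)
  exact (abs_add_le _ _).trans (add_le_add hmain hanchor)

lemma abs_inner_calA_e1_perp_perp_perp_le_three_mul (hR : HasRIP A δ) (hδ : δ ≤ 5 / 4)
    (hκ : 0 ≤ κ) {u : EuclideanSpace ℝ (Fin n1)} {v : EuclideanSpace ℝ (Fin n2)}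
    (hu : ‖u‖ ≤ 2) (hv : ‖v‖ ≤ 1)
    (hH : (1 / (m : ℝ)) *
        |∑ i, (((Omat (A i))ᵀ *ᵥ ofE (e1 n1)) ⬝ᵥ ofE v) *
          frobInner (Dmat (A i)) (vecMulVec (ofE (perp u)) (ofE (perp v)))|
      ≤ κ * ‖calA A (vecMulVec (ofE (perp u)) (ofE (perp v)))‖) :
    |⟪calA A (vecMulVec (ofE (e1 n1)) (ofE (perp v))),
        calA A (vecMulVec (ofE (perp u)) (ofE (perp v)))⟫| ≤ 3 * κ := by
  have hnorm : ‖calA A (vecMulVec (ofE (perp u)) (ofE (perp v)))‖ ≤ 3 :=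
    calc _ ≤ 3 / 2 * frobNorm (vecMulVec (ofE (perp u)) (ofE (perp v))) :=
          hR.norm_calA_le hδ ((Matrix.rank_vecMulVec_le _ _).trans (by norm_num))
      _ = 3 / 2 * (‖perp u‖ * ‖perp v‖) := by rw [frobNorm_rankOne]
      _ ≤ 3 / 2 * (2 * 1) := by
          gcongr
          exacts [(norm_perp_le u).trans hu, (norm_perp_le v).trans hv]
      _ = 3 := by norm_num
  rw [inner_calA_e1_perp_perp_perp, abs_mul, abs_inv, Nat.abs_cast, ← one_div]
  calc _ ≤ κ * ‖calA A (vecMulVec (ofE (perp u)) (ofE (perp v)))‖ := hH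
    _ ≤ κ * 3 := by gcongr
    _ = 3 * κ := mul_comm κ 3

lemma abs_inner_calA_e1_perp_perp_perp_le (hR : HasRIP A δ) (hδ : 0 ≤ δ) (hδ' : δ ≤ 5 / 4)
    (hκ : 0 ≤ κ) {u ut : EuclideanSpace ℝ (Fin n1)} {v vt : EuclideanSpace ℝ (Fin n2)}
    (hu : ‖perp u‖ ≤ 1) (hut : ‖ut‖ ≤ 2) (hv : ‖v‖ ≤ 1) (hvt : ‖vt‖ ≤ 1)
    (hH : (1 / (m : ℝ)) *
        |∑ i, (((Omat (A i))ᵀ *ᵥ ofE (e1 n1)) ⬝ᵥ ofE vt) *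
          frobInner (Dmat (A i)) (vecMulVec (ofE (perp ut)) (ofE (perp vt)))|
      ≤ κ * ‖calA A (vecMulVec (ofE (perp ut)) (ofE (perp vt)))‖) :
    |⟪calA A (vecMulVec (ofE (e1 n1)) (ofE (perp v))),
        calA A (vecMulVec (ofE (perp u)) (ofE (perp v)))⟫|
      ≤ δ * ‖perp u - perp ut‖ + 2 * δ * ‖perp v - perp vt‖ + 3 * κ := by
  have he1 : ‖e1 n1‖ ≤ 1 := norm_e1_le_one
  have hpv : ‖perp v‖ ≤ 1 := (norm_perp_le v).trans hv
  have hpvt : ‖perp vt‖ ≤ 1 := (norm_perp_le vt).trans hvt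
  rw [← perp_sub, ← perp_sub]
  set d := perp (v - vt) with hd
  set w := perp (u - ut) with hw
  have hsplit : ⟪calA A (vecMulVec (ofE (e1 n1)) (ofE (perp v))),
        calA A (vecMulVec (ofE (perp u)) (ofE (perp v)))⟫ =
      ⟪calA A (vecMulVec (ofE (e1 n1)) (ofE d)),
          calA A (vecMulVec (ofE (perp u)) (ofE (perp v)))⟫
        + ⟪calA A (vecMulVec (ofE (e1 n1)) (ofE (perp vt))),
          calA A (vecMulVec (ofE (perp u)) (ofE d))⟫
        + ⟪calA A (vecMulVec (ofE (e1 n1)) (ofE (perp vt))),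
          calA A (vecMulVec (ofE w) (ofE (perp vt)))⟫
        + ⟪calA A (vecMulVec (ofE (e1 n1)) (ofE (perp vt))),
          calA A (vecMulVec (ofE (perp ut)) (ofE (perp vt)))⟫ := by
    have hv' : perp v = d + perp vt := by rw [hd, perp_sub, sub_add_cancel]
    have hu' : perp u = w + perp ut := by rw [hw, perp_sub, sub_add_cancel]
    rw [hv', hu']
    simp only [rankOne_add_left, rankOne_add_right, calA_add, inner_add_left, inner_add_right]
    ring
  have h₁ : |⟪calA A (vecMulVec (ofE (e1 n1)) (ofE d)),
      calA A (vecMulVec (ofE (perp u)) (ofE (perp v)))⟫| ≤ δ * ‖d‖ := by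
    refine (hR.abs_inner_rankOne_le (by rw [inner_e1_perp, zero_mul])).trans ?_
    calc δ * (‖e1 n1‖ * ‖d‖) * (‖perp u‖ * ‖perp v‖) ≤ δ * (1 * ‖d‖) * (1 * 1) := by gcongr
      _ = δ * ‖d‖ := by ring
  have h₂ : |⟪calA A (vecMulVec (ofE (e1 n1)) (ofE (perp vt))),
      calA A (vecMulVec (ofE (perp u)) (ofE d))⟫| ≤ δ * ‖d‖ := by
    refine (hR.abs_inner_rankOne_le (by rw [inner_e1_perp, zero_mul])).trans ?_
    calc δ * (‖e1 n1‖ * ‖perp vt‖) * (‖perp u‖ * ‖d‖) ≤ δ * (1 * 1) * (1 * ‖d‖) := by gcongr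
      _ = δ * ‖d‖ := by ring
  have h₃ : |⟪calA A (vecMulVec (ofE (e1 n1)) (ofE (perp vt))),
      calA A (vecMulVec (ofE w) (ofE (perp vt)))⟫| ≤ δ * ‖w‖ := by
    refine (hR.abs_inner_rankOne_le (by rw [inner_e1_perp, zero_mul])).trans ?_
    calc δ * (‖e1 n1‖ * ‖perp vt‖) * (‖w‖ * ‖perp vt‖) ≤ δ * (1 * 1) * (‖w‖ * 1) := by gcongr
      _ = δ * ‖w‖ := by ring
  have h₄ := abs_inner_calA_e1_perp_perp_perp_le_three_mul hR hδ' hκ hut hvt hH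
  rw [hsplit]
  refine (abs_add_le _ _).trans ((add_le_add_left (abs_add_three _ _ _) _).trans ?_)
  linarith

end Bounds

/-- Lemma `nearindependencebounds`. -/
theorem statement9 (K : ℝ) (hK : 1 ≤ K) :
    ∃ C : ℝ, 0 < C ∧
      ∀ (n1 n2 m : ℕ) (T : ℕ) (η δ : ℝ), 0 < η → 0 < δ → δ < 1 / 2 →
      ∀ (A : Fin m → Matrix (Fin n1) (Fin n2) ℝ),
      ∀ (v vt : EuclideanSpace ℝ (Fin n2)), ‖v‖ = 1 → ‖vt‖ = 1 →
      ∀ (ut : EuclideanSpace ℝ (Fin n1)), ‖ut‖ ≤ 2 →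
      ∀ (u : EuclideanSpace ℝ (Fin n1)), NormalEq A u v →
      HasRIP A δ →
      (1 / (m : ℝ)) * ‖toE ((∑ i, ent11 (A i) • Omat (A i)) *ᵥ ofE (perp vt))‖
          ≤ K * Real.sqrt ((Real.log T + Real.log η) / m) * ‖perp vt‖ →
      (1 / (m : ℝ)) *
          |∑ i, (((Omat (A i))ᵀ *ᵥ ofE (e1 n1)) ⬝ᵥ ofE vt) *
            frobInner (Dmat (A i)) (vecMulVec (ofE (perp ut)) (ofE (perp vt)))|
        ≤ K * Real.sqrt ((Real.log T + Real.log η) / m) *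
            ‖calA A (vecMulVec (ofE (perp ut)) (ofE (perp vt)))‖ →
      |⟪calA A (vecMulVec (ofE (e1 n1)) (ofE (perp v))),
          calA A (vecMulVec (ofE (e1 n1)) (ofE (e1 n2)))⟫|
        ≤ δ * ‖perp v - perp vt‖ + C * Real.sqrt ((Real.log T + Real.log η) / m) ∧
      |⟪calA A (vecMulVec (ofE (e1 n1)) (ofE (perp v))),
          calA A (vecMulVec (ofE (perp u)) (ofE (perp v)))⟫|
        ≤ δ * ‖perp u - perp ut‖ + 2 * δ * ‖perp v - perp vt‖
          + C * Real.sqrt ((Real.log T + Real.log η) / m) := by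
  refine ⟨3 * K, by linarith, ?_⟩
  intro n1 n2 m T η δ _ hδ hδ' A v vt hv hvt ut hut u hNE hR hH₁ hH₂
  have hκ : 0 ≤ K * Real.sqrt ((Real.log T + Real.log η) / m) :=
    mul_nonneg (by linarith) (Real.sqrt_nonneg _)
  refine ⟨?_, ?_⟩
  · refine (abs_inner_calA_e1_perp_e1_e1_le hR hδ.le hκ hvt.le hH₁).trans ?_
    linarith
  · refine (abs_inner_calA_e1_perp_perp_perp_le hR hδ.le (by linarith) hκ
      (hNE.norm_perp_le_one hR hδ' hv) hut hv.le hvt.le hH₂).trans_eq ?_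
    ring

end ALSPaper
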